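/- arXiv:2012.12941 — 3 statements merged into one kernel-verified Lean document; each statement's English description precedes it below -/
import Mathlib

section
/- Suppose every Υ_t is invertible and the Schur complement σ := −Σ_{t∈T} ρ_t·Υ_t⁻¹·ρ_tᵀ is an invertible m × m matrix. Define λ* := σ⁻¹·(Γ − Σ_{t∈T} ρ_t·Υ_t⁻¹·ζ_t) and, for each t ∈ T, ω*_t := Υ_t⁻¹·(ζ_t − ρ_tᵀ·λ*). Then ((ω*_t)_{t∈T}, λ*) solves the arrowhead KKT system: Υ_t·ω*_t + ρ_tᵀ·λ* = ζ_t for every t ∈ T, and Σ_{t∈T} ρ_t·ω*_t = Γ. -/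
open Matrix

namespace Matrix

variable {T m n R : Type*} [Fintype T] [Fintype m] [Fintype n]

theorem mulVec_nonsing_inv_mulVec [DecidableEq n] [CommRing R] {A : Matrix n n R}
    (hA : IsUnit A.det) (v : n → R) : A *ᵥ (A⁻¹ *ᵥ v) = v := by
  rw [mulVec_mulVec, mul_nonsing_inv A hA, one_mulVec]

theorem sum_mulVec_mulVec_sub [NonUnitalRing R] (P : T → Matrix m n R) (A : T → Matrix n n R)
    (Q : T → Matrix n m R) (z : T → n → R) (x : m → R) :
    ∑ t, P t *ᵥ (A t *ᵥ (z t - Q t *ᵥ x)) =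
      ∑ t, P t *ᵥ (A t *ᵥ z t) - (∑ t, P t * A t * Q t) *ᵥ x := by
  simp only [mulVec_sub, sum_mulVec, mulVec_mulVec, Matrix.mul_assoc, Finset.sum_sub_distrib]

end Matrix

/-- The Schur-complement factorisation and forward/backward substitution produce
a solution of the arrowhead KKT system. -/
theorem arrowhead_schur_solution
    {T n m : Type*} [Fintype T] [Fintype n] [Fintype m]
    [DecidableEq n] [DecidableEq m]
    (Υ : T → Matrix n n ℝ) (ρ : T → Matrix m n ℝ) (ζ : T → n → ℝ) (Γ : m → ℝ)
    (hΥ : ∀ t, IsUnit (Υ t).det)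
    (hσ : IsUnit (-(∑ t, ρ t * (Υ t)⁻¹ * (ρ t)ᵀ)).det) :
    let σ : Matrix m m ℝ := -(∑ t, ρ t * (Υ t)⁻¹ * (ρ t)ᵀ)
    let lamStar : m → ℝ :=
      σ⁻¹.mulVec (Γ - ∑ t, (ρ t).mulVec ((Υ t)⁻¹.mulVec (ζ t)))
    let ωStar : T → n → ℝ :=
      fun t => (Υ t)⁻¹.mulVec (ζ t - (ρ t)ᵀ.mulVec lamStar)
    (∀ t, (Υ t).mulVec (ωStar t) + (ρ t)ᵀ.mulVec lamStar = ζ t) ∧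
      ∑ t, (ρ t).mulVec (ωStar t) = Γ := by
  intro σ lamStar ωStar
  refine ⟨fun t => by simp only [ωStar, mulVec_nonsing_inv_mulVec (hΥ t), sub_add_cancel], ?_⟩
  calc ∑ t, ρ t *ᵥ ωStar t
      = ∑ t, ρ t *ᵥ ((Υ t)⁻¹ *ᵥ ζ t) + σ *ᵥ lamStar := by
        rw [sum_mulVec_mulVec_sub, neg_mulVec, sub_eq_add_neg]
    _ = Γ := by
        rw [mulVec_nonsing_inv_mulVec hσ, add_sub_cancel]
end

section
/- For all i, m ∈ n_b, the partial derivative of the complex bus power injection S_i with respect to the angle θ_m exists and equals j·([i = m]·V_i·conj(I_i) − V_i·conj(Y_{i m})·conj(V_m)); i.e. the one-variable function t ↦ S_i computed from the angle vector obtained by replacing θ_m with t has derivative j·([i = m]·V_i·conj(I_i) − V_i·conj(Y_{i m})·conj(V_m)) at t = θ_m. (In matrix form this is the (i, m) entry of j·diag(V)·(diag(conj(I)) − conj(Y)·diag(conj(V))).) -/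
open Matrix

/-- Complex bus voltage `V_k = v_k · exp(j θ_k)`. -/
noncomputable def busV {nb : Type*} (v θ : nb → ℝ) (k : nb) : ℂ :=
  (v k : ℂ) * Complex.exp (Complex.I * (θ k : ℂ))

/-- Bus current injection `I_i = Σ_k Y_{i k} V_k`. -/
noncomputable def busI {nb : Type*} [Fintype nb] (Y : Matrix nb nb ℂ)
    (v θ : nb → ℝ) (i : nb) : ℂ :=
  ∑ k, Y i k * busV v θ k

/-- Complex bus power injection `S_i = V_i · conj(I_i)`. -/
noncomputable def busS {nb : Type*} [Fintype nb] (Y : Matrix nb nb ℂ)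
    (v θ : nb → ℝ) (i : nb) : ℂ :=
  busV v θ i * (starRingEnd ℂ) (busI Y v θ i)

/-!
Among the bus voltages only `V_m` depends on `θ_m`, with `∂V_m/∂θ_m = j V_m`. Hence
`∂I_i/∂θ_m = j Y_{im} V_m`, and the product rule applied to `S_i = V_i · conj(I_i)`, with
conjugation commuting with the real derivative, gives the formula.
-/

theorem hasDerivAt_ofReal_mul_exp_I_mul (r t : ℝ) :
    HasDerivAt (fun s : ℝ => (r : ℂ) * Complex.exp (Complex.I * s))
      (Complex.I * ((r : ℂ) * Complex.exp (Complex.I * t))) t := by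
  have h := (((hasDerivAt_id' (t : ℂ)).const_mul Complex.I).cexp.const_mul (r : ℂ)).comp_ofReal
  convert h using 1
  ring

section Angle

variable {nb : Type*} [DecidableEq nb]

theorem busV_update_of_ne (v θ : nb → ℝ) {m k : nb} (hk : k ≠ m) (t : ℝ) :
    busV v (Function.update θ m t) k = busV v θ k := by
  rw [busV, busV, Function.update_of_ne hk]

theorem hasDerivAt_busV_update (v θ : nb → ℝ) (m k : nb) :
    HasDerivAt (fun t : ℝ => busV v (Function.update θ m t) k)
      ((if k = m then Complex.I else 0) * busV v θ k) (θ m) := by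
  by_cases hk : k = m
  · subst hk
    simpa only [busV, Function.update_self, if_true] using
      hasDerivAt_ofReal_mul_exp_I_mul (v k) (θ k)
  · simp only [busV_update_of_ne v θ hk, if_neg hk, zero_mul]
    exact hasDerivAt_const _ _

theorem hasDerivAt_busI_update [Fintype nb] (Y : Matrix nb nb ℂ) (v θ : nb → ℝ) (i m : nb) :
    HasDerivAt (fun t : ℝ => busI Y v (Function.update θ m t) i)
      (Y i m * (Complex.I * busV v θ m)) (θ m) := by
  have h := HasDerivAt.fun_sum (u := Finset.univ)
    fun k _ => (hasDerivAt_busV_update v θ m k).const_mul (Y i k)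
  simpa only [busI, ite_mul, zero_mul, mul_ite, mul_zero, Finset.sum_ite_eq', Finset.mem_univ,
    if_true] using h

end Angle

/-- Partial derivative of the complex bus power injection `S_i` with respect to
the voltage angle `θ_m`. -/
theorem hasDerivAt_busS_angle {nb : Type*} [Fintype nb] [DecidableEq nb]
    (Y : Matrix nb nb ℂ) (v θ : nb → ℝ) (i m : nb) :
    HasDerivAt (fun t : ℝ => busS Y v (Function.update θ m t) i)
      (Complex.I *
        ((if i = m then 1 else 0) * busV v θ i * (starRingEnd ℂ) (busI Y v θ i)
          - busV v θ i * (starRingEnd ℂ) (Y i m) * (starRingEnd ℂ) (busV v θ m)))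
      (θ m) := by
  refine ((hasDerivAt_busV_update v θ m i).fun_mul
    (hasDerivAt_busI_update Y v θ i m).star).congr_deriv ?_
  simp only [Function.update_eq_self, star_mul', RCLike.star_def, Complex.conj_I]
  split_ifs <;> ring
end

section
/- For all i, m ∈ n_b, the partial derivative of the complex bus power injection S_i with respect to the voltage magnitude v_m exists and equals [i = m]·exp(j·θ_i)·conj(I_i) + V_i·conj(Y_{i m})·conj(exp(j·θ_m)); i.e. the one-variable function t ↦ S_i computed from the magnitude vector obtained by replacing v_m with t has this derivative at t = v_m. (In matrix form this is the (i, m) entry of diag(conj(I))·diag(F) + diag(V)·conj(Y)·diag(conj(F)), where F_k = exp(j·θ_k).) -/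
open Matrix

theorem hasDerivAt_update_apply {𝕜 ι : Type*} [NontriviallyNormedField 𝕜] [DecidableEq ι]
    (x : ι → 𝕜) (m i : ι) (y : 𝕜) :
    HasDerivAt (fun t => Function.update x m t i) (if i = m then 1 else 0) y := by
  simpa only [Pi.single_apply] using hasDerivAt_pi.mp (hasDerivAt_update x m y) i

section Magnitude

variable {nb : Type*} [DecidableEq nb] (v θ : nb → ℝ) (m : nb) (y : ℝ)

theorem hasDerivAt_busV_update_magnitude (i : nb) :
    HasDerivAt (fun t : ℝ => busV (Function.update v m t) θ i)
      ((if i = m then 1 else 0) * Complex.exp (Complex.I * (θ i : ℂ))) y := by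
  have h := ((hasDerivAt_update_apply v m i y).ofReal_comp).mul_const
    (Complex.exp (Complex.I * (θ i : ℂ)))
  simpa only [busV, apply_ite, Complex.ofReal_one, Complex.ofReal_zero] using h

theorem hasDerivAt_busI_update_magnitude [Fintype nb] (Y : Matrix nb nb ℂ) (i : nb) :
    HasDerivAt (fun t : ℝ => busI Y (Function.update v m t) θ i)
      (Y i m * Complex.exp (Complex.I * (θ m : ℂ))) y := by
  have h := HasDerivAt.fun_sum (u := Finset.univ) fun k _ =>
    (hasDerivAt_busV_update_magnitude v θ m y k).const_mul (Y i k)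
  simpa only [busI, ite_mul, one_mul, zero_mul, mul_ite, mul_zero, Finset.sum_ite_eq',
    Finset.mem_univ, if_true] using h

end Magnitude

/-- Partial derivative of the complex bus power injection `S_i` with respect to
the voltage magnitude `v_m`. -/
theorem hasDerivAt_busS_magnitude {nb : Type*} [Fintype nb] [DecidableEq nb]
    (Y : Matrix nb nb ℂ) (v θ : nb → ℝ) (i m : nb) :
    HasDerivAt (fun t : ℝ => busS Y (Function.update v m t) θ i)
      ((if i = m then 1 else 0) * Complex.exp (Complex.I * (θ i : ℂ)) *
          (starRingEnd ℂ) (busI Y v θ i)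
        + busV v θ i * (starRingEnd ℂ) (Y i m) *
          (starRingEnd ℂ) (Complex.exp (Complex.I * (θ m : ℂ))))
      (v m) := by
  have h := (hasDerivAt_busV_update_magnitude v θ m (v m) i).mul
    (hasDerivAt_busI_update_magnitude v θ m (v m) Y i).star
  simp only [Function.update_eq_self] at h
  refine h.congr_deriv ?_
  simp only [star_mul', RCLike.star_def]
  ring
end
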